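/- arXiv:2104.07148 — 2 statements merged into one kernel-verified Lean document; each statement's English description precedes it below -/
import Mathlib

section
/- For ε ∈ Sym₂(ℝ²) and ϑ ∈ ℝ², the following are equivalent: (i) for all ζ, τ ∈ ℝ², (ε + ζ ⊗ₛ ϑ) : (τ⊗τ) ≤ (I + ζ⊗ζ) : (τ⊗τ); (ii) (1/4)·ϑ⊗ϑ + ε ⪯ I. Here ζ ⊗ₛ ϑ = (ζ⊗ϑ + ϑ⊗ζ)/2 is the symmetric tensor product. -/
/-!
Both sides are conditions on quadratic forms in `τ`. Against `τ ⊗ τ`, condition (i) reads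
`τᵀ ε τ + s (ϑ·τ) ≤ |τ|² + s²` with `s = ζ·τ`, and for `τ ≠ 0` the number `s` is arbitrary.
Minimising `s² - s (ϑ·τ)` at `s = (ϑ·τ)/2` gives `τᵀ ε τ + (ϑ·τ)²/4 ≤ |τ|²`, which is (ii).
-/

open Matrix

/-- Frobenius inner product of 2×2 matrices. -/
def frob2 (A B : Matrix (Fin 2) (Fin 2) ℝ) : ℝ := ∑ i, ∑ j, A i j * B i j

theorem frob2_vecMulVec_self (A : Matrix (Fin 2) (Fin 2) ℝ) (τ : Fin 2 → ℝ) :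
    frob2 A (vecMulVec τ τ) = τ ⬝ᵥ A *ᵥ τ := by
  simp only [frob2, vecMulVec_apply, dotProduct, mulVec, Fin.sum_univ_two]
  ring

section DotProduct

variable {n R : Type*} [Fintype n]

theorem dotProduct_vecMulVec_mulVec [CommSemiring R] (u v τ : n → R) :
    τ ⬝ᵥ vecMulVec u v *ᵥ τ = (u ⬝ᵥ τ) * (v ⬝ᵥ τ) := by
  rw [vecMulVec_mulVec, op_smul_eq_smul, dotProduct_smul, smul_eq_mul,
    dotProduct_comm τ u, mul_comm]

theorem dotProduct_left_surjective [Field R] {τ : n → R} (hτ : τ ≠ 0) :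
    Function.Surjective (· ⬝ᵥ τ) := by
  classical
  obtain ⟨i, hi⟩ := Function.ne_iff.mp hτ
  intro s
  exact ⟨Pi.single i (s / τ i), by simp [single_dotProduct, div_mul_cancel₀ _ hi]⟩

end DotProduct

theorem forall_add_mul_le_add_sq_iff {K : Type*} [Field K] [LinearOrder K]
    [IsStrictOrderedRing K] {a b c : K} :
    (∀ s : K, a + s * b ≤ c + s ^ 2) ↔ a + b ^ 2 / 4 ≤ c := by
  refine ⟨fun h => by nlinarith [h (b / 2)], fun h s => by nlinarith [sq_nonneg (s - b / 2)]⟩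

/-- (∀ ζ τ, (ε + ζ⊗ₛϑ):(τ⊗τ) ≤ (I + ζ⊗ζ):(τ⊗τ)) ↔ (1/4)ϑ⊗ϑ + ε ⪯ I. -/
theorem stmt2 (ε : Matrix (Fin 2) (Fin 2) ℝ) (ϑ : Fin 2 → ℝ) (hε : ε.IsHermitian) :
    (∀ ζ τ : Fin 2 → ℝ,
        frob2 (ε + (1/2 : ℝ) • (Matrix.vecMulVec ζ ϑ + Matrix.vecMulVec ϑ ζ))
            (Matrix.vecMulVec τ τ) ≤
          frob2 ((1 : Matrix (Fin 2) (Fin 2) ℝ) + Matrix.vecMulVec ζ ζ)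
            (Matrix.vecMulVec τ τ)) ↔
      ((1 : Matrix (Fin 2) (Fin 2) ℝ) -
        ((1/4 : ℝ) • Matrix.vecMulVec ϑ ϑ + ε)).PosSemidef := by
  have hϑ : (vecMulVec ϑ ϑ).IsHermitian := by
    simpa using (posSemidef_vecMulVec_self_star ϑ).isHermitian
  rw [posSemidef_iff_dotProduct_mulVec,
    and_iff_right (isHermitian_one.sub ((hϑ.smul (IsSelfAdjoint.all _)).add hε)), forall_comm]
  refine forall_congr' fun τ => ?_
  simp only [frob2_vecMulVec_self, star_trivial, add_mulVec, sub_mulVec, smul_mulVec,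
    one_mulVec, dotProduct_add, dotProduct_sub, dotProduct_smul, dotProduct_vecMulVec_mulVec,
    smul_eq_mul]
  rcases eq_or_ne τ 0 with rfl | hτ
  · simp
  have hreduced := ((dotProduct_left_surjective hτ).forall (p := fun s =>
    τ ⬝ᵥ ε *ᵥ τ + s * (ϑ ⬝ᵥ τ) ≤ τ ⬝ᵥ τ + s ^ 2)).symm.trans forall_add_mul_le_add_sq_iff
  constructor
  · intro h
    linarith [hreduced.1 fun ζ => by linarith [h ζ]]
  · intro h ζ
    linarith [hreduced.2 (by linarith) ζ]
end

section
/- Let u ∈ ℝ², w ∈ ℝ, and let ε ∈ Sym₂(ℝ²) and ϑ ∈ ℝ². Embed ε̂ = ε + ϑ ⊗ₛ e₃ ∈ Sym₂(ℝ³), where ε occupies the upper-left 2×2 block, ϑ ⊗ₛ e₃ = (ϑ⊗e₃ + e₃⊗ϑ)/2, and the (3,3) entry is zero. Then sup over τ̂ ∈ ℝ³ with |τ̂| ≤ 1 of ε̂:(τ̂⊗τ̂) equals sup over τ ∈ ℝ², |τ| ≤ 1, and ψ ∈ ℝ of (ε:(τ⊗τ) + ψ·(ϑ·τ))/(1+ψ²).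 -/
open Matrix

/-- Frobenius inner product of 3×3 matrices. -/
def frob3 (A B : Matrix (Fin 3) (Fin 3) ℝ) : ℝ := ∑ i, ∑ j, A i j * B i j

private lemma key_bd (a t u : ℝ) (ht : t ^ 2 ≤ 1) (hu : u ^ 2 ≤ 1) : a * (t * u) ≤ |a| := by
  have h1 : |t| ≤ 1 := by rw [abs_le]; constructor <;> nlinarith
  have h2 : |u| ≤ 1 := by rw [abs_le]; constructor <;> nlinarith
  calc a * (t * u) ≤ |a * (t * u)| := le_abs_self _
    _ = |a| * (|t| * |u|) := by rw [abs_mul, abs_mul]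
    _ ≤ |a| * 1 := by
        have : |t| * |u| ≤ 1 := by nlinarith [abs_nonneg t, abs_nonneg u]
        nlinarith [abs_nonneg a]
    _ = |a| := mul_one _

/-- With ε̂ = ε + ϑ ⊗ₛ e₃ (ε in the upper-left 2×2 block, (3,3) entry zero),
    sup_{|τ̂|≤1} ε̂:(τ̂⊗τ̂) = sup_{|τ|≤1, ψ∈ℝ} (ε:(τ⊗τ) + ψ(ϑ·τ))/(1+ψ²). -/
theorem stmt10 (ε : Matrix (Fin 2) (Fin 2) ℝ) (ϑ : Fin 2 → ℝ) (hε : ε.IsHermitian) :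
    sSup {x : ℝ | ∃ τ : Fin 3 → ℝ, (∑ i, τ i ^ 2) ≤ 1 ∧
        x = frob3 (!![ε 0 0, ε 0 1, ϑ 0 / 2;
                      ε 1 0, ε 1 1, ϑ 1 / 2;
                      ϑ 0 / 2, ϑ 1 / 2, 0]) (Matrix.vecMulVec τ τ)} =
      sSup {x : ℝ | ∃ τ : Fin 2 → ℝ, ∃ ψ : ℝ, (∑ i, τ i ^ 2) ≤ 1 ∧
        x = (frob2 ε (Matrix.vecMulVec τ τ) + ψ * (ϑ ⬝ᵥ τ)) / (1 + ψ ^ 2)} := by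
  set S := {x : ℝ | ∃ τ : Fin 3 → ℝ, (∑ i, τ i ^ 2) ≤ 1 ∧
        x = frob3 (!![ε 0 0, ε 0 1, ϑ 0 / 2;
                      ε 1 0, ε 1 1, ϑ 1 / 2;
                      ϑ 0 / 2, ϑ 1 / 2, 0]) (Matrix.vecMulVec τ τ)} with hS
  set T := {x : ℝ | ∃ τ : Fin 2 → ℝ, ∃ ψ : ℝ, (∑ i, τ i ^ 2) ≤ 1 ∧
        x = (frob2 ε (Matrix.vecMulVec τ τ) + ψ * (ϑ ⬝ᵥ τ)) / (1 + ψ ^ 2)} with hT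
  have valS : ∀ τ : Fin 3 → ℝ,
      frob3 (!![ε 0 0, ε 0 1, ϑ 0 / 2;
                ε 1 0, ε 1 1, ϑ 1 / 2;
                ϑ 0 / 2, ϑ 1 / 2, 0]) (Matrix.vecMulVec τ τ)
      = ε 0 0 * (τ 0 * τ 0) + ε 0 1 * (τ 0 * τ 1) + ε 1 0 * (τ 1 * τ 0)
        + ε 1 1 * (τ 1 * τ 1) + ϑ 0 * (τ 0 * τ 2) + ϑ 1 * (τ 1 * τ 2) := by
    intro τ
    simp [frob3, Fin.sum_univ_three, Matrix.vecMulVec_apply]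
    ring
  have valT : ∀ (τ : Fin 2 → ℝ) (ψ : ℝ),
      (frob2 ε (Matrix.vecMulVec τ τ) + ψ * (ϑ ⬝ᵥ τ)) / (1 + ψ ^ 2)
      = (ε 0 0 * (τ 0 * τ 0) + ε 0 1 * (τ 0 * τ 1) + ε 1 0 * (τ 1 * τ 0)
        + ε 1 1 * (τ 1 * τ 1) + ψ * (ϑ 0 * τ 0 + ϑ 1 * τ 1)) / (1 + ψ ^ 2) := by
    intro τ ψ
    simp [frob2, Fin.sum_univ_two, Matrix.vecMulVec_apply, dotProduct]
    ring_nf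
  -- T ⊆ S
  have hTS : T ⊆ S := by
    rintro x ⟨τ, ψ, hτ, rfl⟩
    have h1 : (0:ℝ) < 1 + ψ ^ 2 := by positivity
    set s : ℝ := (Real.sqrt (1 + ψ ^ 2))⁻¹ with hsdef
    have hs2 : s ^ 2 = (1 + ψ ^ 2)⁻¹ := by
      rw [hsdef, inv_pow, Real.sq_sqrt h1.le]
    have hmul : s ^ 2 * (1 + ψ ^ 2) = 1 := by
      rw [hs2]; field_simp
    refine ⟨![s * τ 0, s * τ 1, s * ψ], ?_, ?_⟩
    · have heq : ∑ i, (![s * τ 0, s * τ 1, s * ψ]) i ^ 2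
          = s ^ 2 * (τ 0 ^ 2 + τ 1 ^ 2 + ψ ^ 2) := by
        simp [Fin.sum_univ_three]; ring
      have h2 : τ 0 ^ 2 + τ 1 ^ 2 ≤ 1 := by
        simpa [Fin.sum_univ_two] using hτ
      rw [heq, hs2, inv_mul_le_iff₀ h1]
      linarith
    · rw [valS, valT]
      simp only [Matrix.cons_val_zero, Matrix.cons_val_one, Matrix.head_cons,
        Matrix.cons_val_two, Matrix.tail_cons]
      refine (div_eq_iff h1.ne').mpr ?_
      linear_combination (-(ε 0 0 * (τ 0 * τ 0) + ε 0 1 * (τ 0 * τ 1) + ε 1 0 * (τ 1 * τ 0)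
        + ε 1 1 * (τ 1 * τ 1) + ψ * (ϑ 0 * τ 0 + ϑ 1 * τ 1))) * hmul
  have h0S : (0:ℝ) ∈ S := ⟨0, by simp, by rw [valS]; simp⟩
  have h0T : (0:ℝ) ∈ T := ⟨0, 0, by simp, by rw [valT]; simp⟩
  have hbS : BddAbove S := by
    refine ⟨|ε 0 0| + |ε 0 1| + |ε 1 0| + |ε 1 1| + |ϑ 0| + |ϑ 1|, ?_⟩
    rintro x ⟨τ, hτ, rfl⟩
    rw [valS]
    have hsum : τ 0 ^ 2 + τ 1 ^ 2 + τ 2 ^ 2 ≤ 1 := by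
      simpa [Fin.sum_univ_three] using hτ
    have h0 : τ 0 ^ 2 ≤ 1 := by nlinarith [sq_nonneg (τ 1), sq_nonneg (τ 2)]
    have h1 : τ 1 ^ 2 ≤ 1 := by nlinarith [sq_nonneg (τ 0), sq_nonneg (τ 2)]
    have h2 : τ 2 ^ 2 ≤ 1 := by nlinarith [sq_nonneg (τ 0), sq_nonneg (τ 1)]
    have b1 := key_bd (ε 0 0) (τ 0) (τ 0) h0 h0
    have b2 := key_bd (ε 0 1) (τ 0) (τ 1) h0 h1
    have b3 := key_bd (ε 1 0) (τ 1) (τ 0) h1 h0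
    have b4 := key_bd (ε 1 1) (τ 1) (τ 1) h1 h1
    have b5 := key_bd (ϑ 0) (τ 0) (τ 2) h0 h2
    have b6 := key_bd (ϑ 1) (τ 1) (τ 2) h1 h2
    linarith
  have hbT : BddAbove T := hbS.mono hTS
  have hTne : T.Nonempty := ⟨0, h0T⟩
  have hSne : S.Nonempty := ⟨0, h0S⟩
  refine le_antisymm ?_ (csSup_le_csSup hbS hTne hTS)
  refine csSup_le hSne ?_
  rintro x ⟨τ, hτ, rfl⟩
  rw [valS]
  set v : ℝ := ε 0 0 * (τ 0 * τ 0) + ε 0 1 * (τ 0 * τ 1) + ε 1 0 * (τ 1 * τ 0)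
        + ε 1 1 * (τ 1 * τ 1) + ϑ 0 * (τ 0 * τ 2) + ϑ 1 * (τ 1 * τ 2) with hv
  rcases le_or_gt v 0 with hle | hpos
  · exact hle.trans (le_csSup hbT h0T)
  · -- v > 0 ⇒ τ' ≠ 0 in first two coords
    have hsum : τ 0 ^ 2 + τ 1 ^ 2 + τ 2 ^ 2 ≤ 1 := by
      simpa [Fin.sum_univ_three] using hτ
    have hn : 0 < τ 0 ^ 2 + τ 1 ^ 2 := by
      rcases lt_or_ge 0 (τ 0 ^ 2 + τ 1 ^ 2) with h | h
      · exact h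
      · exfalso
        have h00 : τ 0 = 0 := by nlinarith [sq_nonneg (τ 0), sq_nonneg (τ 1)]
        have h11 : τ 1 = 0 := by nlinarith [sq_nonneg (τ 0), sq_nonneg (τ 1)]
        rw [hv, h00, h11] at hpos
        simp at hpos
    set n : ℝ := τ 0 ^ 2 + τ 1 ^ 2 with hndef
    have hsq : Real.sqrt n ^ 2 = n := Real.sq_sqrt hn.le
    have hsqpos : 0 < Real.sqrt n := Real.sqrt_pos.mpr hn
    set r : ℝ := (Real.sqrt n)⁻¹ with hrdef
    have hr2 : r ^ 2 * n = 1 := by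
      rw [hrdef, inv_pow, hsq]
      field_simp
    -- candidate T element
    have hk : 0 < n + τ 2 ^ 2 := by positivity
    have hmem : v / (n + τ 2 ^ 2) ∈ T := by
      refine ⟨![r * τ 0, r * τ 1], r * τ 2, ?_, ?_⟩
      · have : ∑ i, (![r * τ 0, r * τ 1]) i ^ 2 = r ^ 2 * n := by
          simp [Fin.sum_univ_two, hndef]; ring
        rw [this, hr2]
      · rw [valT]
        simp only [Matrix.cons_val_zero, Matrix.cons_val_one, Matrix.head_cons]
        rw [div_eq_div_iff hk.ne' (by positivity)]
        linear_combination (-v) * hr2 + (r ^ 2 * (n + τ 2 ^ 2)) * hv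
    have hvle : v ≤ v / (n + τ 2 ^ 2) := by
      rw [le_div_iff₀ hk]
      nlinarith
    exact hvle.trans (le_csSup hbT hmem)
end
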